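/- Let γ ∈ (0,1) and let 0 < a ≤ b be real numbers. Then ∫_a^b r⁻¹·(ln(1+1/r))^(γ−1) dr ≤ ((1+b)/γ)·(ln(1+(b−a)/a))^γ. -/

import Mathlib

open Real Set MeasureTheory

/-! With `L r = log (1 + 1/r)` one has `d/dr (-L r ^ γ / γ) = r⁻¹ L r ^ (γ-1) / (1 + r)`, so on
`[a, b]` the integrand is at most `(1 + b)` times an exact derivative and the integral is at most
`(1 + b) / γ * (L a ^ γ - L b ^ γ)`. Subadditivity of `t ↦ t ^ γ` bounds `L a ^ γ - L b ^ γ` by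
`(L a - L b) ^ γ`, and `L a - L b = log (b / a) - log ((1 + b) / (1 + a)) ≤ log (b / a)`. -/

lemma Real.rpow_sub_rpow_le_sub_rpow {x y p : ℝ} (hy : 0 ≤ y) (hyx : y ≤ x) (hp : 0 ≤ p)
    (hp1 : p ≤ 1) : x ^ p - y ^ p ≤ (x - y) ^ p := by
  have := rpow_add_le_add_rpow (sub_nonneg.2 hyx) hy hp hp1
  rw [sub_add_cancel] at this
  linarith

lemma log_one_add_inv_pos {x : ℝ} (hx : 0 < x) : 0 < log (1 + 1 / x) :=
  log_pos (by simpa using hx)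

lemma log_one_add_inv_sub_log_one_add_inv_le {a b : ℝ} (ha : 0 < a) (hab : a ≤ b) :
    log (1 + 1 / a) - log (1 + 1 / b) ≤ log (b / a) := by
  have hb : 0 < b := ha.trans_le hab
  have key : log (1 + 1 / a) - log (1 + 1 / b) = log (b / a) - log ((1 + b) / (1 + a)) := by
    rw [← log_div (by positivity) (by positivity), ← log_div (by positivity) (by positivity)]
    congr 1
    field_simp
    ring
  rw [key, sub_le_self_iff]
  exact log_nonneg ((one_le_div (by positivity)).2 (by linarith))

lemma hasDerivAt_log_one_add_inv_rpow (γ : ℝ) {x : ℝ} (hx : 0 < x) :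
    HasDerivAt (fun r ↦ log (1 + 1 / r) ^ γ)
      (-γ * (x⁻¹ * log (1 + 1 / x) ^ (γ - 1) / (1 + x))) x := by
  have hlog : HasDerivAt (fun r ↦ log (1 + 1 / r)) (-(x ^ 2)⁻¹ / (1 + 1 / x)) x := by
    refine HasDerivAt.log ?_ (by positivity)
    simpa using (hasDerivAt_inv hx.ne').const_add 1
  convert hlog.rpow_const (p := γ) (Or.inl (log_one_add_inv_pos hx).ne') using 1
  field_simp
  ring

lemma intervalIntegrable_inv_mul_log_one_add_inv_rpow (p : ℝ) {a b : ℝ} (ha : 0 < a) (hb : 0 < b) :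
    IntervalIntegrable (fun r ↦ r⁻¹ * log (1 + 1 / r) ^ p) volume a b := by
  refine ContinuousOn.intervalIntegrable fun x hx ↦ ?_
  have hx : 0 < x := (lt_min ha hb).trans_le hx.1
  fun_prop (disch := first | positivity | exact Or.inl (log_one_add_inv_pos hx).ne')

lemma intervalIntegrable_inv_mul_log_one_add_inv_rpow_div_one_add (p : ℝ) {a b : ℝ} (ha : 0 < a)
    (hb : 0 < b) :
    IntervalIntegrable (fun r ↦ r⁻¹ * log (1 + 1 / r) ^ p / (1 + r)) volume a b :=
  (intervalIntegrable_inv_mul_log_one_add_inv_rpow p ha hb).mul_continuousOn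
    (g := fun r ↦ (1 + r)⁻¹)
    (ContinuousOn.inv₀ (by fun_prop) fun x hx ↦ by linarith [(lt_min ha hb).trans_le hx.1])

lemma integral_inv_mul_log_one_add_inv_rpow_div_one_add {γ a b : ℝ} (hγ : γ ≠ 0) (ha : 0 < a)
    (hab : a ≤ b) :
    ∫ r in a..b, r⁻¹ * log (1 + 1 / r) ^ (γ - 1) / (1 + r)
      = (log (1 + 1 / a) ^ γ - log (1 + 1 / b) ^ γ) / γ := by
  have hb : 0 < b := ha.trans_le hab
  rw [intervalIntegral.integral_eq_sub_of_hasDerivAt (f := fun r ↦ -(log (1 + 1 / r) ^ γ) / γ)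
    (fun x hx ↦ ?_) (intervalIntegrable_inv_mul_log_one_add_inv_rpow_div_one_add _ ha hb)]
  · ring
  · have hx : 0 < x := (lt_min ha hb).trans_le hx.1
    exact ((hasDerivAt_log_one_add_inv_rpow γ hx).neg.div_const γ).congr_deriv (by field_simp)

lemma integral_inv_mul_log_one_add_inv_rpow_le {γ a b : ℝ} (hγ : 0 < γ) (ha : 0 < a)
    (hab : a ≤ b) :
    ∫ r in a..b, r⁻¹ * log (1 + 1 / r) ^ (γ - 1)
      ≤ (1 + b) / γ * (log (1 + 1 / a) ^ γ - log (1 + 1 / b) ^ γ) := by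
  have hb : 0 < b := ha.trans_le hab
  calc ∫ r in a..b, r⁻¹ * log (1 + 1 / r) ^ (γ - 1)
      ≤ ∫ r in a..b, (1 + b) * (r⁻¹ * log (1 + 1 / r) ^ (γ - 1) / (1 + r)) := by
        refine intervalIntegral.integral_mono_on hab
          (intervalIntegrable_inv_mul_log_one_add_inv_rpow _ ha hb)
          ((intervalIntegrable_inv_mul_log_one_add_inv_rpow_div_one_add _ ha hb).const_mul _)
          fun r hr ↦ ?_
        have hr0 : 0 < r := ha.trans_le hr.1
        have hLr := log_one_add_inv_pos hr0
        calc r⁻¹ * log (1 + 1 / r) ^ (γ - 1)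
            = (1 + r) * (r⁻¹ * log (1 + 1 / r) ^ (γ - 1) / (1 + r)) := by field_simp
          _ ≤ (1 + b) * (r⁻¹ * log (1 + 1 / r) ^ (γ - 1) / (1 + r)) := by gcongr; exact hr.2
    _ = (1 + b) / γ * (log (1 + 1 / a) ^ γ - log (1 + 1 / b) ^ γ) := by
        rw [intervalIntegral.integral_const_mul,
          integral_inv_mul_log_one_add_inv_rpow_div_one_add hγ.ne' ha hab]
        ring

theorem integral_cone_estimate (γ a b : ℝ) (hγ : γ ∈ Set.Ioo (0:ℝ) 1)
    (ha : 0 < a) (hab : a ≤ b) :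
    ∫ r in Set.Icc a b, r⁻¹ * (Real.log (1 + 1/r)) ^ (γ - 1)
      ≤ ((1 + b) / γ) * (Real.log (1 + (b - a)/a)) ^ γ := by
  obtain ⟨hγ0, hγ1⟩ := hγ
  have hb : 0 < b := ha.trans_le hab
  have hLab : log (1 + 1 / b) ≤ log (1 + 1 / a) := by gcongr
  have hba : 1 + (b - a) / a = b / a := by field_simp; ring
  rw [integral_Icc_eq_integral_Ioc, ← intervalIntegral.integral_of_le hab, hba]
  calc ∫ r in a..b, r⁻¹ * log (1 + 1 / r) ^ (γ - 1)
      ≤ (1 + b) / γ * (log (1 + 1 / a) ^ γ - log (1 + 1 / b) ^ γ) :=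
        integral_inv_mul_log_one_add_inv_rpow_le hγ0 ha hab
    _ ≤ (1 + b) / γ * (log (1 + 1 / a) - log (1 + 1 / b)) ^ γ := by
        gcongr
        exact rpow_sub_rpow_le_sub_rpow (log_one_add_inv_pos hb).le hLab hγ0.le hγ1.le
    _ ≤ (1 + b) / γ * log (b / a) ^ γ := by
        gcongr
        exact log_one_add_inv_sub_log_one_add_inv_le ha hab
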